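/- Let Z ~ SN_k(Ω,α). Then there exists a non-singular k×k matrix A* such that the random vector Z* = A* Z has distribution SN_k(I_k, α*), where at most one component of α* ∈ ℝ^k is nonzero and the nonzero component (if any) equals √(αᵀΩα); equivalently, the density of Z* is z ↦ 2 (∏_{i=1}^k φ(z_i)) Φ(α*_m z_m) for some index m, where α*_m = √(αᵀΩα). -/

import Mathlib

/-! Writing `Ω = Mᵀ M`, the change of variables `z ↦ M⁻ᵀ z` turns `SN(Ω, α)` into
`SN(M⁻ᵀ Ω M⁻¹, M α) = SN(I, M α)`: the Jacobian `|det M|⁻¹` is exactly absorbed by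
`(det Ω)^{-1/2}`. The factor `M` is only determined up to a left orthogonal factor, and a
Householder reflection can be used to turn `M α`, whose squared length is `αᵀ Ω α`, into a
multiple of a coordinate vector. -/
open MeasureTheory Matrix ProbabilityTheory Real

/-- Standard normal cumulative distribution function
`Φ(x) = ∫_{-∞}^x (2π)^{-1/2} exp(-u²/2) du`. -/
noncomputable def stdNormCDF (x : ℝ) : ℝ :=
  ∫ u in Set.Iic x, (2 * Real.pi) ^ (-(1:ℝ)/2) * Real.exp (-(u ^ 2) / 2)

/-- Density `φ(z; Ω) = (2π)^{-k/2} (det Ω)^{-1/2} exp(-½ zᵀ Ω⁻¹ z)` of the centred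
multivariate normal distribution with covariance matrix `Ω`. -/
noncomputable def mvNormalPDF {ι : Type*} [Fintype ι] [DecidableEq ι]
    (Ω : Matrix ι ι ℝ) (z : ι → ℝ) : ℝ :=
  (2 * Real.pi) ^ (-(Fintype.card ι : ℝ) / 2) * Ω.det ^ (-(1:ℝ)/2) *
    Real.exp (-(z ⬝ᵥ Ω⁻¹.mulVec z) / 2)

/-- Density `f(z) = 2 φ(z; Ω) Φ(αᵀ z)` of the multivariate skew-normal
distribution `SN(Ω, α)`. -/
noncomputable def snPDF {ι : Type*} [Fintype ι] [DecidableEq ι]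
    (Ω : Matrix ι ι ℝ) (α : ι → ℝ) (z : ι → ℝ) : ℝ :=
  2 * mvNormalPDF Ω z * stdNormCDF (α ⬝ᵥ z)

/-- A correlation matrix: symmetric positive definite with unit diagonal. -/
def IsCorrelationMatrix {ι : Type*} [Fintype ι] (Ω : Matrix ι ι ℝ) : Prop :=
  Ω.PosDef ∧ ∀ i, Ω i i = 1

/-- The law of the multivariate skew-normal distribution `SN(Ω, α)`:
the measure on `ι → ℝ` with density `snPDF Ω α` w.r.t. Lebesgue measure. -/
noncomputable def snMeasure {ι : Type*} [Fintype ι] [DecidableEq ι]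
    (Ω : Matrix ι ι ℝ) (α : ι → ℝ) : Measure (ι → ℝ) :=
  volume.withDensity fun z => ENNReal.ofReal (snPDF Ω α z)

/-- Chi-square density with `p` degrees of freedom. -/
noncomputable def chiSqPDF (p : ℕ) (x : ℝ) : ℝ :=
  if 0 < x then x ^ ((p:ℝ)/2 - 1) * Real.exp (-x/2) / (2 ^ ((p:ℝ)/2) * Real.Gamma ((p:ℝ)/2))
  else 0

/-- Chi-square law with `p` degrees of freedom. -/
noncomputable def chiSqMeasure (p : ℕ) : Measure ℝ :=
  volume.withDensity fun x => ENNReal.ofReal (chiSqPDF p x)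

lemma stdNormCDF_monotone : Monotone stdNormCDF := by
  intro x y hxy
  have hint : Integrable fun u : ℝ => (2 * π) ^ (-(1:ℝ)/2) * exp (-(u ^ 2) / 2) := by
    simpa only [neg_div, neg_mul, one_div, inv_mul_eq_div] using
      (integrable_exp_neg_mul_sq (by norm_num : (0:ℝ) < 1/2)).const_mul ((2 * π) ^ (-(1:ℝ)/2))
  exact setIntegral_mono_set hint.integrableOn (.of_forall fun u => by positivity)
    (Set.Iic_subset_Iic.mpr hxy).eventuallyLE

lemma MeasurableEquiv.map_withDensity {α β : Type*} [MeasurableSpace α] [MeasurableSpace β]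
    (e : α ≃ᵐ β) (μ : Measure α) {f : α → ENNReal} (hf : Measurable f) :
    (μ.withDensity f).map e = (μ.map e).withDensity (f ∘ e.symm) := by
  ext s hs
  rw [Measure.map_apply e.measurable hs, withDensity_apply _ (e.measurable hs),
    withDensity_apply _ hs, setLIntegral_map hs (hf.comp e.symm.measurable) e.measurable]
  simp

section

variable {ι : Type*} [Fintype ι] [DecidableEq ι]

lemma measurable_snPDF (Ω : Matrix ι ι ℝ) (α : ι → ℝ) : Measurable (snPDF Ω α) := by
  unfold snPDF mvNormalPDF
  have hq : Continuous fun z : ι → ℝ => z ⬝ᵥ Ω⁻¹ *ᵥ z := by fun_prop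
  have hl : Continuous fun z : ι → ℝ => α ⬝ᵥ z := by fun_prop
  exact (hq.neg.div_const 2).rexp.measurable.const_mul _ |>.const_mul _ |>.mul
    (stdNormCDF_monotone.measurable.comp hl.measurable)

lemma mvNormalPDF_inv_mulVec (Ω A : Matrix ι ι ℝ) (hΩ : 0 ≤ Ω.det) (z : ι → ℝ) :
    |A.det|⁻¹ * mvNormalPDF Ω (A⁻¹ *ᵥ z) = mvNormalPDF (A * Ω * Aᵀ) z := by
  have hquad : (A⁻¹ *ᵥ z) ⬝ᵥ Ω⁻¹ *ᵥ (A⁻¹ *ᵥ z) = z ⬝ᵥ (A * Ω * Aᵀ)⁻¹ *ᵥ z := by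
    rw [Matrix.mul_inv_rev, Matrix.mul_inv_rev, ← transpose_nonsing_inv, ← mulVec_mulVec,
      dotProduct_mulVec z, vecMul_transpose, mulVec_mulVec]
  have hdet : (A * Ω * Aᵀ).det ^ (-(1:ℝ)/2) = |A.det|⁻¹ * Ω.det ^ (-(1:ℝ)/2) := by
    rw [det_mul, det_mul, det_transpose, mul_right_comm, ← sq,
      Real.mul_rpow (sq_nonneg _) hΩ, ← sq_abs, ← Real.rpow_natCast, ← Real.rpow_mul (abs_nonneg _)]
    norm_num [Real.rpow_neg_one]
  unfold mvNormalPDF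
  rw [hquad, hdet]
  ring

lemma map_mulVec_volume_withDensity {A : Matrix ι ι ℝ} (hA : A.det ≠ 0) {f : (ι → ℝ) → ENNReal}
    (hf : Measurable f) :
    (volume.withDensity f).map (A *ᵥ ·) =
      volume.withDensity fun z => ENNReal.ofReal |A.det|⁻¹ * f (A⁻¹ *ᵥ z) := by
  have hAunit : IsUnit A.det := hA.isUnit
  let e : (ι → ℝ) ≃ᵐ (ι → ℝ) :=
    { toFun := (A *ᵥ ·)
      invFun := (A⁻¹ *ᵥ ·)
      left_inv x := by simp [mulVec_mulVec, nonsing_inv_mul A hAunit]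
      right_inv x := by simp [mulVec_mulVec, mul_nonsing_inv A hAunit]
      measurable_toFun := show Measurable (A *ᵥ ·) by fun_prop
      measurable_invFun := show Measurable (A⁻¹ *ᵥ ·) by fun_prop }
  have hvol : volume.map e = ENNReal.ofReal |A.det|⁻¹ • volume := by
    rw [← abs_inv]
    exact Real.map_matrix_volume_pi_eq_smul_volume_pi hA
  rw [show (A *ᵥ ·) = e from rfl, e.map_withDensity _ hf, hvol, withDensity_smul_measure,
    ← withDensity_smul' _ _ ENNReal.ofReal_ne_top]
  rfl

lemma snPDF_inv_mulVec (Ω A : Matrix ι ι ℝ) (hΩ : 0 ≤ Ω.det) (α z : ι → ℝ) :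
    |A.det|⁻¹ * snPDF Ω α (A⁻¹ *ᵥ z) = snPDF (A * Ω * Aᵀ) (A⁻¹ᵀ *ᵥ α) z := by
  have hlin : α ⬝ᵥ A⁻¹ *ᵥ z = A⁻¹ᵀ *ᵥ α ⬝ᵥ z := by
    rw [dotProduct_mulVec, ← mulVec_transpose, dotProduct_comm]
  unfold snPDF
  rw [← mvNormalPDF_inv_mulVec Ω A hΩ, hlin]
  ring

theorem snMeasure_map_mulVec {Ω A : Matrix ι ι ℝ} (hΩ : 0 ≤ Ω.det) (hA : A.det ≠ 0)
    (α : ι → ℝ) :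
    (snMeasure Ω α).map (A *ᵥ ·) = snMeasure (A * Ω * Aᵀ) (A⁻¹ᵀ *ᵥ α) := by
  rw [snMeasure, map_mulVec_volume_withDensity hA (measurable_snPDF Ω α).ennreal_ofReal,
    snMeasure]
  congr with z
  rw [← ENNReal.ofReal_mul (by positivity), snPDF_inv_mulVec Ω A hΩ]

open Submodule in
lemma exists_mem_orthogonalGroup_mulVec_eq_single (v : ι → ℝ) (m : ι) :
    ∃ Q ∈ orthogonalGroup ι ℝ, Q *ᵥ v = Pi.single m √(v ⬝ᵥ v) := by
  let b := (EuclideanSpace.basisFun ι ℝ).toBasis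
  let x : EuclideanSpace ℝ ι := WithLp.toLp 2 v
  let y : EuclideanSpace ℝ ι := WithLp.toLp 2 (Pi.single m √(v ⬝ᵥ v))
  have hxy : ‖x‖ = ‖y‖ := by
    simp [x, y, EuclideanSpace.norm_eq, dotProduct, ← sq, abs_of_nonneg]
  let R := reflection (ℝ ∙ (x - y))ᗮ
  refine ⟨LinearMap.toMatrix b b R.toLinearMap, R.toMatrix_mem_unitaryGroup _ _, ?_⟩
  have hRx : R x = y := reflection_sub hxy
  exact (LinearMap.toMatrix_mulVec_repr b b R.toLinearMap x).trans
    (congrArg (fun z => ⇑(b.repr z)) hRx)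

open scoped MatrixOrder in
lemma Matrix.PosSemidef.exists_transpose_mul_self_eq {Ω : Matrix ι ι ℝ} (hΩ : Ω.PosSemidef) :
    ∃ L : Matrix ι ι ℝ, Lᵀ * L = Ω := by
  obtain ⟨L, rfl⟩ := CStarAlgebra.nonneg_iff_eq_star_mul_self.mp hΩ.nonneg
  exact ⟨L, by rw [star_eq_conjTranspose, conjTranspose_eq_transpose_of_trivial]⟩

lemma Matrix.PosDef.exists_transpose_mul_self_eq_of_mulVec_eq_single {Ω : Matrix ι ι ℝ}
    (hΩ : Ω.PosDef) (α : ι → ℝ) (m : ι) :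
    ∃ M : Matrix ι ι ℝ, Mᵀ * M = Ω ∧ M *ᵥ α = Pi.single m √(α ⬝ᵥ Ω *ᵥ α) := by
  obtain ⟨L, rfl⟩ := hΩ.posSemidef.exists_transpose_mul_self_eq
  obtain ⟨Q, hQ, hQL⟩ := exists_mem_orthogonalGroup_mulVec_eq_single (L *ᵥ α) m
  refine ⟨Q * L, ?_, ?_⟩
  · have hQQ : Qᵀ * Q = 1 := (mem_orthogonalGroup_iff' ι ℝ).mp hQ
    rw [transpose_mul, Matrix.mul_assoc, ← Matrix.mul_assoc Qᵀ, hQQ, Matrix.one_mul]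
  · rw [← mulVec_mulVec, hQL, ← mulVec_mulVec, dotProduct_mulVec α, vecMul_transpose]

lemma Matrix.PosDef.exists_canonical_transform {Ω : Matrix ι ι ℝ} (hΩ : Ω.PosDef) (α : ι → ℝ)
    (m : ι) : ∃ A : Matrix ι ι ℝ, A.det ≠ 0 ∧ A * Ω * Aᵀ = 1 ∧
      A⁻¹ᵀ *ᵥ α = Pi.single m √(α ⬝ᵥ Ω *ᵥ α) := by
  obtain ⟨M, hMΩ, hMα⟩ := hΩ.exists_transpose_mul_self_eq_of_mulVec_eq_single α m
  have hM : IsUnit M.det := by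
    refine (isUnit_iff_ne_zero).mpr fun h => hΩ.det_pos.ne' ?_
    rw [← hMΩ, det_mul, h, mul_zero]
  refine ⟨M⁻¹ᵀ, ?_, ?_, ?_⟩
  · simpa [det_nonsing_inv] using hM.ne_zero
  · rw [← hMΩ, transpose_transpose, ← Matrix.mul_assoc, ← transpose_mul,
      mul_nonsing_inv M hM, transpose_one, Matrix.one_mul, mul_nonsing_inv M hM]
  · rw [← transpose_nonsing_inv, nonsing_inv_nonsing_inv M hM, transpose_transpose, hMα]

end

theorem skewNormal_canonical_form_general {k : ℕ} (hk : 0 < k)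
    (Ω : Matrix (Fin k) (Fin k) ℝ) (hΩ : IsCorrelationMatrix Ω) (α : Fin k → ℝ)
    {S : Type*} [MeasureSpace S]
    (Z : S → Fin k → ℝ) (hZmeas : Measurable Z)
    (hZlaw : Measure.map Z ℙ = snMeasure Ω α) :
    ∃ (Astar : Matrix (Fin k) (Fin k) ℝ) (m : Fin k), Astar.det ≠ 0 ∧
      Measure.map (fun ω => Astar.mulVec (Z ω)) ℙ =
        snMeasure (1 : Matrix (Fin k) (Fin k) ℝ)
          (Pi.single m (Real.sqrt (α ⬝ᵥ Ω.mulVec α))) := by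
  obtain ⟨A, hA, hAΩ, hAα⟩ := hΩ.1.exists_canonical_transform α ⟨0, hk⟩
  refine ⟨A, ⟨0, hk⟩, hA, ?_⟩
  calc Measure.map (fun ω => A *ᵥ Z ω) ℙ = (Measure.map Z ℙ).map (A *ᵥ ·) :=
        (Measure.map_map (g := (A *ᵥ ·)) (by fun_prop) hZmeas).symm
    _ = _ := by rw [hZlaw, snMeasure_map_mulVec hΩ.1.det_pos.le hA, hAΩ, hAα]

/-- canonical form.  For `Z ~ SN_k(Ω, α)` there is a non-singular
matrix `A*` such that `Z* = A* Z ~ SN_k(I_k, α*)` where `α*` has at most one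
nonzero component, equal to `√(αᵀΩα)`. -/
theorem skewNormal_canonical_form {k : ℕ} (hk : 0 < k)
    (Ω : Matrix (Fin k) (Fin k) ℝ) (hΩ : IsCorrelationMatrix Ω) (α : Fin k → ℝ)
    {S : Type*} [MeasureSpace S] [IsProbabilityMeasure (ℙ : Measure S)]
    (Z : S → Fin k → ℝ) (hZmeas : Measurable Z)
    (hZlaw : Measure.map Z ℙ = snMeasure Ω α) :
    ∃ (Astar : Matrix (Fin k) (Fin k) ℝ) (m : Fin k), Astar.det ≠ 0 ∧
      Measure.map (fun ω => Astar.mulVec (Z ω)) ℙ =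
        snMeasure (1 : Matrix (Fin k) (Fin k) ℝ)
          (Pi.single m (Real.sqrt (α ⬝ᵥ Ω.mulVec α))) :=
  skewNormal_canonical_form_general hk Ω hΩ α Z hZmeas hZlaw
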